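/- Let E_s, E_r, B_s : [0,∞) → [0,∞) be nondecreasing with E_r bounded on every compact interval, and let r_sr, r_rd be rate functions with lim_{p→∞} r_rd(p)/p = 0. For T > 0 let D(T) denote the two-hop maximum throughput over the deadline [0,T]. Then D is continuous on (0,∞). -/

import Mathlib

open MeasureTheory Set Filter intervalIntegral

noncomputable section

/-- A rate function: continuous, strictly increasing, concave on `[0,∞)`,
vanishing at `0` and tending to `∞`. -/
def IsRateFunction (r : ℝ → ℝ) : Prop :=
  ContinuousOn r (Set.Ici 0) ∧ StrictMonoOn r (Set.Ici 0) ∧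
    ConcaveOn ℝ (Set.Ici 0) r ∧ r 0 = 0 ∧
    Filter.Tendsto r Filter.atTop Filter.atTop

/-- Two-hop feasibility of a pair of power policies `(psr, prd)` on `[0,T]`. -/
def TwoHopFeasible (T : ℝ) (Es Er Bs rsr rrd psr prd : ℝ → ℝ) : Prop :=
  IntervalIntegrable psr MeasureTheory.volume 0 T ∧
  IntervalIntegrable prd MeasureTheory.volume 0 T ∧
  IntervalIntegrable (fun s => rsr (psr s)) MeasureTheory.volume 0 T ∧
  IntervalIntegrable (fun s => rrd (prd s)) MeasureTheory.volume 0 T ∧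
  (∀ t ∈ Set.Icc (0:ℝ) T, 0 ≤ psr t ∧ 0 ≤ prd t) ∧
  (∀ t ∈ Set.Icc (0:ℝ) T, (∫ s in (0:ℝ)..t, psr s) ≤ Es t) ∧
  (∀ t ∈ Set.Icc (0:ℝ) T, (∫ s in (0:ℝ)..t, prd s) ≤ Er t) ∧
  (∀ t ∈ Set.Icc (0:ℝ) T, (∫ s in (0:ℝ)..t, rsr (psr s)) ≤ Bs t) ∧
  (∀ t ∈ Set.Icc (0:ℝ) T,
    (∫ s in (0:ℝ)..t, rrd (prd s)) ≤ ∫ s in (0:ℝ)..t, rsr (psr s))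

/-- The two-hop maximum throughput by deadline `T`. -/
def MaxThroughput (Es Er Bs rsr rrd : ℝ → ℝ) (T : ℝ) : ℝ :=
  sSup {x : ℝ | ∃ psr prd : ℝ → ℝ,
    TwoHopFeasible T Es Er Bs rsr rrd psr prd ∧
    x = ∫ t in (0:ℝ)..T, rrd (prd t)}

/-!
Extending a feasible pair by zero past the deadline keeps it feasible, because the budgets
`E_s, E_r, B_s` are nondecreasing; so `D` is nondecreasing. Conversely, let `T ≤ T'` and take a
policy feasible on `[0, T']`. Its throughput on `[0, T]` is at most `D T`, and on `[T, T']`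
concavity of `r_rd` together with `r_rd 0 = 0` gives `r_rd p ≤ r_rd K + (r_rd K / K) p` for every
`K > 0`, hence
`D T' ≤ D T + (T' - T) r_rd K + (r_rd K / K) E_r T'`.
Since `r_rd K / K → 0`, the last term is small for a suitable `K`, and then the middle one is
small for `T'` close to `T`. A monotone function with such increments is continuous.
-/

namespace IsRateFunction

variable {r : ℝ → ℝ}

lemma map_zero (hr : IsRateFunction r) : r 0 = 0 := hr.2.2.2.1

lemma monotoneOn (hr : IsRateFunction r) : MonotoneOn r (Ici 0) := hr.2.1.monotoneOn

lemma nonneg (hr : IsRateFunction r) {p : ℝ} (hp : 0 ≤ p) : 0 ≤ r p :=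
  hr.map_zero ▸ hr.monotoneOn self_mem_Ici hp hp

lemma le_add_div_mul (hr : IsRateFunction r) {K p : ℝ} (hK : 0 < K) (hp : 0 ≤ p) :
    r p ≤ r K + r K / K * p := by
  have hrK : 0 ≤ r K / K * p := mul_nonneg (div_nonneg (hr.nonneg hK.le) hK.le) hp
  rcases le_total p K with hpK | hKp
  · linarith [hr.monotoneOn hp hK.le hpK]
  · have hslope := hr.2.2.1.antitoneOn_slope_gt (x := 0) self_mem_Ici
      ⟨hK.le, hK⟩ ⟨hp, hK.trans_le hKp⟩ hKp
    simp only [slope_def_field, hr.map_zero, sub_zero] at hslope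
    have hp0 : 0 < p := hK.trans_le hKp
    have : r p ≤ r K / K * p := by rwa [div_le_iff₀ hp0] at hslope
    linarith [hr.nonneg hK.le]

end IsRateFunction

lemma intervalIntegral_indicator_Iic {f : ℝ → ℝ} {a t T : ℝ} (ht : a ≤ t) (hT : a ≤ T) :
    ∫ s in a..t, (Iic T).indicator f s = ∫ s in a..min t T, f s := by
  rw [integral_of_le ht, setIntegral_indicator measurableSet_Iic, Ioc_inter_Iic,
    integral_of_le (le_min ht hT)]

lemma IntervalIntegrable.indicator_Iic {f : ℝ → ℝ} {a T T' : ℝ} (hT : a ≤ T) (hTT' : T ≤ T')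
    (hf : IntervalIntegrable f volume a T) :
    IntervalIntegrable ((Iic T).indicator f) volume a T' := by
  rw [intervalIntegrable_iff_integrableOn_Ioc_of_le (hT.trans hTT'),
    integrableOn_indicator_iff measurableSet_Iic, inter_comm, Ioc_inter_Iic, min_eq_right hTT']
  exact (intervalIntegrable_iff_integrableOn_Ioc_of_le hT).1 hf

lemma intervalIntegral_comp_indicator_Iic {f g : ℝ → ℝ} (hg : g 0 = 0) {a t T : ℝ} (ht : a ≤ t)
    (hT : a ≤ T) : ∫ s in a..t, g ((Iic T).indicator f s) = ∫ s in a..min t T, g (f s) := by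
  rw [← intervalIntegral_indicator_Iic ht hT]
  exact congrArg (intervalIntegral · a t volume) (indicator_comp_of_zero hg).symm

theorem MonotoneOn.continuousOn_of_le_add_mul {f : ℝ → ℝ} {s : Set ℝ} (hf : MonotoneOn f s)
    (h : ∀ ε > 0, ∃ C, ∀ x ∈ s, ∀ y ∈ s, x ≤ y → f y ≤ f x + C * (y - x) + ε) :
    ContinuousOn f s := by
  intro x hx
  rw [Metric.continuousWithinAt_iff]
  intro ε hε
  obtain ⟨C, hC⟩ := h (ε / 2) (half_pos hε)
  have hδ : 0 < ε / 2 / (|C| + 1) := by positivity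
  have hclose : ∀ a ∈ s, ∀ b ∈ s, a ≤ b → dist b a < ε / 2 / (|C| + 1) → dist (f b) (f a) < ε := by
    intro a ha b hb hab hba
    rw [Real.dist_eq, abs_of_nonneg (sub_nonneg.2 hab)] at hba
    rw [Real.dist_eq, abs_of_nonneg (sub_nonneg.2 (hf ha hb hab))]
    have hCba : C * (b - a) ≤ |C| * (b - a) := by gcongr; exact le_abs_self C
    have hsmall : (|C| + 1) * (b - a) < ε / 2 := by
      rwa [lt_div_iff₀ (by positivity), mul_comm] at hba
    linarith [hC a ha b hb hab]
  refine ⟨_, hδ, fun y hy hyx => ?_⟩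
  rcases le_total x y with hxy | hyx'
  · exact hclose x hx y hy hxy hyx
  · rw [dist_comm] at hyx ⊢
    exact hclose y hy x hx hyx' hyx

section Feasibility

variable {T T' : ℝ} {Es Er Bs rsr rrd psr prd : ℝ → ℝ}

lemma twoHopFeasible_zero (hEs : ∀ t : ℝ, 0 ≤ t → 0 ≤ Es t) (hEr : ∀ t : ℝ, 0 ≤ t → 0 ≤ Er t)
    (hBs : ∀ t : ℝ, 0 ≤ t → 0 ≤ Bs t) (hrsr : rsr 0 = 0) (hrrd : rrd 0 = 0) :
    TwoHopFeasible T Es Er Bs rsr rrd 0 0 := by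
  refine ⟨intervalIntegrable_const, intervalIntegrable_const, ?_, ?_, fun _ _ => ⟨le_rfl, le_rfl⟩,
    fun t ht => ?_, fun t ht => ?_, fun t ht => ?_, fun t _ => ?_⟩
  · simp [hrsr]
  · simp [hrrd]
  · simpa using hEs t ht.1
  · simpa using hEr t ht.1
  · simpa [hrsr] using hBs t ht.1
  · simp [hrsr, hrrd]

lemma integral_indicator_Iic_le {f g : ℝ → ℝ} (hg : MonotoneOn g (Ici 0)) (hT : 0 ≤ T)
    (hf : ∀ t ∈ Icc (0:ℝ) T, ∫ s in (0:ℝ)..t, f s ≤ g t) {t : ℝ} (ht : 0 ≤ t) :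
    ∫ s in (0:ℝ)..t, (Iic T).indicator f s ≤ g t := by
  rw [intervalIntegral_indicator_Iic ht hT]
  exact (hf _ ⟨le_min ht hT, min_le_right t T⟩).trans
    (hg (le_min ht hT) ht (min_le_left t T))

namespace TwoHopFeasible

lemma mono (hT : 0 ≤ T) (hTT' : T ≤ T') (h : TwoHopFeasible T' Es Er Bs rsr rrd psr prd) :
    TwoHopFeasible T Es Er Bs rsr rrd psr prd := by
  have hu : uIcc 0 T ⊆ uIcc 0 T' := uIcc_subset_uIcc_left (Icc_subset_uIcc ⟨hT, hTT'⟩)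
  have hI : Icc 0 T ⊆ Icc 0 T' := Icc_subset_Icc_right hTT'
  obtain ⟨h₁, h₂, h₃, h₄, h₅, h₆, h₇, h₈, h₉⟩ := h
  exact ⟨h₁.mono_set hu, h₂.mono_set hu, h₃.mono_set hu, h₄.mono_set hu, fun t ht => h₅ t (hI ht),
    fun t ht => h₆ t (hI ht), fun t ht => h₇ t (hI ht), fun t ht => h₈ t (hI ht),
    fun t ht => h₉ t (hI ht)⟩

lemma throughput_le (hT : 0 ≤ T) (h : TwoHopFeasible T Es Er Bs rsr rrd psr prd) :
    ∫ t in (0:ℝ)..T, rrd (prd t) ≤ Bs T :=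
  (h.2.2.2.2.2.2.2.2 T ⟨hT, le_rfl⟩).trans (h.2.2.2.2.2.2.2.1 T ⟨hT, le_rfl⟩)

lemma indicator_Iic (hEs : MonotoneOn Es (Ici 0)) (hEr : MonotoneOn Er (Ici 0))
    (hBs : MonotoneOn Bs (Ici 0)) (hrsr : rsr 0 = 0) (hrrd : rrd 0 = 0) (hT : 0 ≤ T)
    (hTT' : T ≤ T') (h : TwoHopFeasible T Es Er Bs rsr rrd psr prd) :
    TwoHopFeasible T' Es Er Bs rsr rrd ((Iic T).indicator psr) ((Iic T).indicator prd) := by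
  obtain ⟨h₁, h₂, h₃, h₄, h₅, h₆, h₇, h₈, h₉⟩ := h
  have hsr : (fun s => rsr ((Iic T).indicator psr s)) = (Iic T).indicator (fun s => rsr (psr s)) :=
    (indicator_comp_of_zero hrsr).symm
  have hrd : (fun s => rrd ((Iic T).indicator prd s)) = (Iic T).indicator (fun s => rrd (prd s)) :=
    (indicator_comp_of_zero hrrd).symm
  refine ⟨h₁.indicator_Iic hT hTT', h₂.indicator_Iic hT hTT', hsr ▸ h₃.indicator_Iic hT hTT',
    hrd ▸ h₄.indicator_Iic hT hTT', fun t ht => ?_,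
    fun t ht => integral_indicator_Iic_le hEs hT h₆ ht.1,
    fun t ht => integral_indicator_Iic_le hEr hT h₇ ht.1,
    fun t ht => hsr ▸ integral_indicator_Iic_le hBs hT h₈ ht.1, fun t ht => ?_⟩
  · by_cases htT : t ≤ T
    · simpa [htT] using h₅ t ⟨ht.1, htT⟩
    · simp [htT]
  · rw [intervalIntegral_comp_indicator_Iic hrsr ht.1 hT,
      intervalIntegral_comp_indicator_Iic hrrd ht.1 hT]
    exact h₉ _ ⟨le_min ht.1 hT, min_le_right t T⟩

end TwoHopFeasible

lemma throughput_le_maxThroughput (hT : 0 ≤ T) (h : TwoHopFeasible T Es Er Bs rsr rrd psr prd) :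
    ∫ t in (0:ℝ)..T, rrd (prd t) ≤ MaxThroughput Es Er Bs rsr rrd T :=
  le_csSup ⟨Bs T, by rintro _ ⟨_, _, hf, rfl⟩; exact hf.throughput_le hT⟩ ⟨psr, prd, h, rfl⟩

lemma maxThroughput_le {c : ℝ} (h₀ : TwoHopFeasible T Es Er Bs rsr rrd 0 0)
    (h : ∀ psr prd, TwoHopFeasible T Es Er Bs rsr rrd psr prd → ∫ t in (0:ℝ)..T, rrd (prd t) ≤ c) :
    MaxThroughput Es Er Bs rsr rrd T ≤ c :=
  csSup_le ⟨_, 0, 0, h₀, rfl⟩ (by rintro _ ⟨psr, prd, hf, rfl⟩; exact h psr prd hf)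

lemma monotoneOn_maxThroughput (hEs : ∀ t : ℝ, 0 ≤ t → 0 ≤ Es t)
    (hEr : ∀ t : ℝ, 0 ≤ t → 0 ≤ Er t) (hBs : ∀ t : ℝ, 0 ≤ t → 0 ≤ Bs t)
    (hEs_mono : MonotoneOn Es (Ici 0)) (hEr_mono : MonotoneOn Er (Ici 0))
    (hBs_mono : MonotoneOn Bs (Ici 0)) (hrsr : rsr 0 = 0) (hrrd : rrd 0 = 0) :
    MonotoneOn (MaxThroughput Es Er Bs rsr rrd) (Ici 0) := by
  intro T hT T' _ hTT'
  refine maxThroughput_le (twoHopFeasible_zero hEs hEr hBs hrsr hrrd) fun psr prd h => ?_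
  have hext := throughput_le_maxThroughput (hT.trans hTT')
    (h.indicator_Iic hEs_mono hEr_mono hBs_mono hrsr hrrd hT hTT')
  rwa [intervalIntegral_comp_indicator_Iic hrrd (hT.trans hTT') hT, min_eq_right hTT'] at hext

lemma maxThroughput_le_add (hEs : ∀ t : ℝ, 0 ≤ t → 0 ≤ Es t)
    (hEr : ∀ t : ℝ, 0 ≤ t → 0 ≤ Er t) (hBs : ∀ t : ℝ, 0 ≤ t → 0 ≤ Bs t) (hrsr : rsr 0 = 0)
    (hrrd : IsRateFunction rrd) {T T' K : ℝ} (hT : 0 ≤ T) (hTT' : T ≤ T') (hK : 0 < K) :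
    MaxThroughput Es Er Bs rsr rrd T' ≤
      MaxThroughput Es Er Bs rsr rrd T + (T' - T) * rrd K + rrd K / K * Er T' := by
  refine maxThroughput_le (twoHopFeasible_zero hEs hEr hBs hrsr hrrd.map_zero) fun psr prd h => ?_
  have hhead := throughput_le_maxThroughput hT (h.mono hT hTT')
  obtain ⟨-, hprd, -, hrate, hnonneg, -, hEr_prd, -, -⟩ := h
  have hsub₁ : uIcc 0 T ⊆ uIcc 0 T' := uIcc_subset_uIcc_left (Icc_subset_uIcc ⟨hT, hTT'⟩)
  have hsub₂ : uIcc T T' ⊆ uIcc 0 T' := uIcc_subset_uIcc_right (Icc_subset_uIcc ⟨hT, hTT'⟩)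
  have hline : IntervalIntegrable (fun s => rrd K + rrd K / K * prd s) volume T T' :=
    intervalIntegrable_const.add ((hprd.mono_set hsub₂).const_mul _)
  have htail : ∫ s in T..T', rrd (prd s) ≤ (T' - T) * rrd K + rrd K / K * ∫ s in T..T', prd s := by
    calc ∫ s in T..T', rrd (prd s) ≤ ∫ s in T..T', rrd K + rrd K / K * prd s :=
          integral_mono_on hTT' (hrate.mono_set hsub₂) hline fun s hs =>
            hrrd.le_add_div_mul hK (hnonneg s ⟨hT.trans hs.1, hs.2⟩).2
      _ = (T' - T) * rrd K + rrd K / K * ∫ s in T..T', prd s := by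
          rw [integral_add intervalIntegrable_const ((hprd.mono_set hsub₂).const_mul _),
            intervalIntegral.integral_const_mul, intervalIntegral.integral_const, smul_eq_mul]
  have henergy : ∫ s in T..T', prd s ≤ Er T' := by
    have hhead_energy : 0 ≤ ∫ s in (0:ℝ)..T, prd s :=
      integral_nonneg hT fun s hs => (hnonneg s ⟨hs.1, hs.2.trans hTT'⟩).2
    have htotal := hEr_prd T' ⟨hT.trans hTT', le_rfl⟩
    rw [← integral_add_adjacent_intervals (hprd.mono_set hsub₁) (hprd.mono_set hsub₂)] at htotal
    linarith
  have hslope : rrd K / K * ∫ s in T..T', prd s ≤ rrd K / K * Er T' :=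
    mul_le_mul_of_nonneg_left henergy (div_nonneg (hrrd.nonneg hK.le) hK.le)
  rw [← integral_add_adjacent_intervals (hrate.mono_set hsub₁) (hrate.mono_set hsub₂)]
  linarith

end Feasibility

theorem maxThroughput_continuous_general
    (Es Er Bs : ℝ → ℝ)
    (hEs_nonneg : ∀ t : ℝ, 0 ≤ t → 0 ≤ Es t) (hEs_mono : MonotoneOn Es (Set.Ici 0))
    (hEr_nonneg : ∀ t : ℝ, 0 ≤ t → 0 ≤ Er t) (hEr_mono : MonotoneOn Er (Set.Ici 0))
    (hBs_nonneg : ∀ t : ℝ, 0 ≤ t → 0 ≤ Bs t) (hBs_mono : MonotoneOn Bs (Set.Ici 0))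
    (rsr rrd : ℝ → ℝ) (hrsr : IsRateFunction rsr) (hrrd : IsRateFunction rrd)
    (hrrd_sublinear : Filter.Tendsto (fun p => rrd p / p) Filter.atTop (nhds 0)) :
    ContinuousOn (MaxThroughput Es Er Bs rsr rrd) (Set.Ioi 0) := by
  intro T hT
  suffices ContinuousOn (MaxThroughput Es Er Bs rsr rrd) (Icc 0 (T + 1)) from
    (this.continuousAt (Icc_mem_nhds hT (lt_add_one T))).continuousWithinAt
  have hmono := monotoneOn_maxThroughput hEs_nonneg hEr_nonneg hBs_nonneg hEs_mono hEr_mono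
    hBs_mono hrsr.map_zero hrrd.map_zero
  refine (hmono.mono Icc_subset_Ici_self).continuousOn_of_le_add_mul fun ε hε => ?_
  have hslope : Tendsto (fun K => rrd K / K * Er (T + 1)) atTop (nhds 0) := by
    simpa using hrrd_sublinear.mul_const (Er (T + 1))
  obtain ⟨K, hK, hKε⟩ := ((eventually_gt_atTop 0).and (hslope.eventually (gt_mem_nhds hε))).exists
  refine ⟨rrd K, fun x hx y hy hxy => ?_⟩
  have hEr_y : rrd K / K * Er y ≤ rrd K / K * Er (T + 1) :=
    mul_le_mul_of_nonneg_left (hEr_mono hy.1 (hy.1.trans hy.2) hy.2)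
      (div_nonneg (hrrd.nonneg hK.le) hK.le)
  linarith [maxThroughput_le_add hEs_nonneg hEr_nonneg hBs_nonneg hrsr.map_zero hrrd hx.1 hxy hK]

/-- Second part of Lemma 3.3: if `r_rd(p)/p → 0` as `p → ∞`, the two-hop maximum
throughput is a continuous function of the deadline on `(0,∞)`. -/
theorem maxThroughput_continuous
    (Es Er Bs : ℝ → ℝ)
    (hEs_nonneg : ∀ t : ℝ, 0 ≤ t → 0 ≤ Es t) (hEs_mono : MonotoneOn Es (Set.Ici 0))
    (hEr_nonneg : ∀ t : ℝ, 0 ≤ t → 0 ≤ Er t) (hEr_mono : MonotoneOn Er (Set.Ici 0))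
    (hEr_bdd : ∀ T : ℝ, 0 < T → ∃ M : ℝ, ∀ t ∈ Set.Icc (0:ℝ) T, Er t ≤ M)
    (hBs_nonneg : ∀ t : ℝ, 0 ≤ t → 0 ≤ Bs t) (hBs_mono : MonotoneOn Bs (Set.Ici 0))
    (rsr rrd : ℝ → ℝ) (hrsr : IsRateFunction rsr) (hrrd : IsRateFunction rrd)
    (hrrd_sublinear : Filter.Tendsto (fun p => rrd p / p) Filter.atTop (nhds 0)) :
    ContinuousOn (MaxThroughput Es Er Bs rsr rrd) (Set.Ioi 0) :=
  maxThroughput_continuous_general Es Er Bs hEs_nonneg hEs_mono hEr_nonneg hEr_mono hBs_nonneg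
    hBs_mono rsr rrd hrsr hrrd hrrd_sublinear
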